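/- Let k be a field, R a k-algebra, and A an R-algebra. Let L be a field extension of k such that A ⊗_k L is flat over R ⊗_k L. Then A is flat over R. -/

import Mathlib

/-!
Base change of the flat map `k → L` makes `R ⊗[k] L` flat over `R`, so `A ⊗[k] L` is flat
over `R` by transitivity. Since `k` is a field, `k → L` has a `k`-linear left inverse, which
makes `A = A ⊗[k] k` an `R`-linear retract of `A ⊗[k] L`, and retracts of flat modules are flat.
-/

open TensorProduct

/-- The natural algebra structure of `R ⊗[k] L` on `A ⊗[k] L` induced by `R → A`. -/
noncomputable local instance tensorBaseAlgebra
    (k : Type*) [CommRing k] (R : Type*) [CommRing R] [Algebra k R]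
    (A : Type*) [CommRing A] [Algebra k A] [Algebra R A] [IsScalarTower k R A]
    (L : Type*) [CommRing L] [Algebra k L] :
    Algebra (R ⊗[k] L) (A ⊗[k] L) :=
  (Algebra.TensorProduct.map (IsScalarTower.toAlgHom k R A) (AlgHom.id k L)).toRingHom.toAlgebra

instance isScalarTower_tensorBaseAlgebra
    (k : Type*) [CommRing k] (R : Type*) [CommRing R] [Algebra k R]
    (A : Type*) [CommRing A] [Algebra k A] [Algebra R A] [IsScalarTower k R A]
    (L : Type*) [CommRing L] [Algebra k L] :
    IsScalarTower R (R ⊗[k] L) (A ⊗[k] L) :=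
  IsScalarTower.of_algebraMap_eq fun r => by
    simp [RingHom.algebraMap_toAlgebra, Algebra.TensorProduct.algebraMap_apply]

namespace Module.Flat

variable {R M : Type*} [CommSemiring R] [AddCommMonoid M] [Module R M]

theorem lTensor_of_retract {k N P : Type*} [CommSemiring k] [Algebra k R] [Module k M]
    [IsScalarTower k R M] [AddCommMonoid N] [Module k N] [AddCommMonoid P]
    [Module k P] [Flat R (M ⊗[k] P)] (i : N →ₗ[k] P) (r : P →ₗ[k] N)
    (h : r ∘ₗ i = LinearMap.id) : Flat R (M ⊗[k] N) :=
  of_retract (AlgebraTensorModule.lTensor R M i) (AlgebraTensorModule.lTensor R M r) <| by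
    rw [← AlgebraTensorModule.lTensor_comp, h, AlgebraTensorModule.lTensor_id]

theorem of_flat_tensorProduct_algebra (k : Type*) [Field k] [Algebra k R] [Module k M]
    [IsScalarTower k R M] (L : Type*) [Ring L] [Nontrivial L] [Algebra k L]
    [Flat R (M ⊗[k] L)] : Flat R M := by
  obtain ⟨g, hg⟩ := (Algebra.linearMap k L).exists_leftInverse_of_injective
    ((Algebra.linearMap k L).ker_eq_bot_of_injective (algebraMap k L).injective)
  have : Flat R (M ⊗[k] k) := lTensor_of_retract (Algebra.linearMap k L) g hg
  exact of_linearEquiv (AlgebraTensorModule.rid k R M).symm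

end Module.Flat

/-- Let `k` be a field, `R` a `k`-algebra, `A` an `R`-algebra, and `L` a
field extension of `k` such that `A ⊗[k] L` is flat over `R ⊗[k] L`.  Then `A` is flat
over `R`. -/
theorem flat_descent_of_baseChange
    (k : Type*) [Field k] (R : Type*) [CommRing R] [Algebra k R]
    (A : Type*) [CommRing A] [Algebra k A] [Algebra R A] [IsScalarTower k R A]
    (L : Type*) [Field L] [Algebra k L]
    (hflat : Module.Flat (R ⊗[k] L) (A ⊗[k] L)) :
    Module.Flat R A :=
  have : Module.Flat R (R ⊗[k] L) := Module.Flat.baseChange k R L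
  have : Module.Flat R (A ⊗[k] L) := Module.Flat.trans R (R ⊗[k] L) (A ⊗[k] L)
  Module.Flat.of_flat_tensorProduct_algebra k L
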